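/- (Catalan's identity for bicomplex Pell numbers) For every integer n and every integer r, BP(n)² − BP(n+r)·BP(n−r) = 12·(−1)^{n−r}·P(r)²·(j + ij). -/

import Mathlib

open scoped TensorProduct

noncomputable def bi : ℂ ⊗[ℝ] ℂ := Complex.I ⊗ₜ[ℝ] 1
noncomputable def bj : ℂ ⊗[ℝ] ℂ := (1 : ℂ) ⊗ₜ[ℝ] Complex.I
noncomputable def bij : ℂ ⊗[ℝ] ℂ := Complex.I ⊗ₜ[ℝ] Complex.I

/-- The bicomplex Pell number `BP n = P n + P (n+1) i + P (n+2) j + P (n+3) ij`. -/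
noncomputable def BP (P : ℤ → ℤ) (n : ℤ) : ℂ ⊗[ℝ] ℂ :=
  (P n : ℝ) • (1 : ℂ ⊗[ℝ] ℂ) + (P (n + 1) : ℝ) • bi + (P (n + 2) : ℝ) • bj +
    (P (n + 3) : ℝ) • bij

/-!
The bicomplex Pell numbers form a Pell-type sequence in the commutative ring `ℂ ⊗[ℝ] ℂ`, and
Catalan's identity holds for every Pell-type sequence `W` in a commutative ring:
`W n ^ 2 - W (n + r) * W (n - r) = (-1) ^ (n - r) * P r ^ 2 * (W 1 ^ 2 - W 0 * W 2)`.
Writing `m = n - r`, the addition formula `W (m + k) = P k * W (m + 1) + P (k - 1) * W m`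
reduces the left side to `P r ^ 2` times the Cassini term `W (m + 1) ^ 2 - W m * W (m + 2)`,
which changes sign at each step. For `W = BP P` the initial Cassini term is `12 (j + ij)`.
-/

def IsPellSeq {M : Type*} [AddCommGroup M] (W : ℤ → M) : Prop :=
  ∀ n, W (n + 2) = 2 • W (n + 1) + W n

namespace IsPellSeq

section AddCommGroup

variable {M : Type*} [AddCommGroup M] {W V : ℤ → M}

theorem add (hW : IsPellSeq W) (hV : IsPellSeq V) : IsPellSeq (fun n => W n + V n) :=
  fun n => by
    simp only [hW n, hV n, smul_add]
    abel

theorem comp_add_right (hW : IsPellSeq W) (c : ℤ) : IsPellSeq (fun n => W (n + c)) :=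
  fun n => by simpa only [add_right_comm _ _ c] using hW (n + c)

theorem zsmul_const {f : ℤ → ℤ} (hf : IsPellSeq f) (x : M) : IsPellSeq (fun n => f n • x) :=
  fun n => by simp only [hf n, add_smul, smul_assoc]

theorem ext (hW : IsPellSeq W) (hV : IsPellSeq V) (h0 : W 0 = V 0) (h1 : W 1 = V 1) :
    W = V := by
  suffices h : ∀ k, W k = V k ∧ W (k + 1) = V (k + 1) from funext fun k => (h k).1
  intro k
  induction k with
  | zero => exact ⟨h0, by simpa using h1⟩
  | succ k ih => exact ⟨ih.2, by rw [add_assoc, one_add_one_eq_two, hW, hV, ih.1, ih.2]⟩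
  | pred k ih =>
    refine ⟨?_, by simpa using ih.1⟩
    have hW' := hW (-k - 1)
    have hV' := hV (-k - 1)
    rw [show -(k : ℤ) - 1 + 2 = -k + 1 by ring, show -(k : ℤ) - 1 + 1 = -k by ring,
      ih.1, ih.2] at hW'
    rw [show -(k : ℤ) - 1 + 2 = -k + 1 by ring, show -(k : ℤ) - 1 + 1 = -k by ring] at hV'
    exact add_left_cancel (hW'.symm.trans hV')

variable {P : ℤ → ℤ}

theorem apply_neg_one (hP : IsPellSeq P) (hP0 : P 0 = 0) (hP1 : P 1 = 1) : P (-1) = 1 := by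
  have := hP (-1)
  norm_num [hP0, hP1] at this
  omega

theorem add_eq (hW : IsPellSeq W) (hP : IsPellSeq P) (hP0 : P 0 = 0) (hP1 : P 1 = 1)
    (m k : ℤ) : W (m + k) = P k • W (m + 1) + P (k - 1) • W m := by
  have h := (hW.comp_add_right m).ext
    ((hP.zsmul_const (W (m + 1))).add ((hP.comp_add_right (-1)).zsmul_const (W m)))
    (by simp [hP0, hP.apply_neg_one hP0 hP1]) (by simp [hP0, hP1, add_comm])
  simpa [add_comm, ← sub_eq_add_neg] using congrFun h k

end AddCommGroup

section CommRing

variable {R : Type*} [CommRing R] {W : ℤ → R}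

theorem apply_add_two (hW : IsPellSeq W) (n : ℤ) : W (n + 2) = 2 * W (n + 1) + W n := by
  rw [hW n, two_nsmul, two_mul]

theorem cassini_succ (hW : IsPellSeq W) (m : ℤ) :
    W (m + 1 + 1) ^ 2 - W (m + 1) * W (m + 1 + 2) = -(W (m + 1) ^ 2 - W m * W (m + 2)) := by
  have h := hW.apply_add_two (m + 1)
  rw [add_assoc m 1 1, one_add_one_eq_two] at h ⊢
  linear_combination W (m + 2) * hW.apply_add_two m - W (m + 1) * h

theorem cassini (hW : IsPellSeq W) (m : ℤ) :
    W (m + 1) ^ 2 - W m * W (m + 2) = (m.negOnePow : ℤ) • (W 1 ^ 2 - W 0 * W 2) := by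
  induction m with
  | zero => simp
  | succ k ih =>
    rw [hW.cassini_succ, ih, Int.negOnePow_succ, Units.val_neg, neg_smul]
  | pred k ih =>
    have h := hW.cassini_succ (-k - 1)
    rw [sub_add_cancel] at h ⊢
    rw [ih] at h
    rw [Int.negOnePow_sub, Int.negOnePow_one, mul_neg_one, Units.val_neg, neg_smul, h, neg_neg]

variable {P : ℤ → ℤ}

theorem catalan_eq_cassini (hW : IsPellSeq W) (hP : IsPellSeq P) (hP0 : P 0 = 0) (hP1 : P 1 = 1)
    (m r : ℤ) :
    W (m + r) ^ 2 - W (m + (r + r)) * W m = P r ^ 2 • (W (m + 1) ^ 2 - W m * W (m + 2)) := by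
  have hP_double : P (r + r) = P r * P (r + 1) + P (r - 1) * P r := hP.add_eq hP hP0 hP1 r r
  have hP_double_sub_one : P (r + r - 1) = P r * P r + P (r - 1) * P (r - 1) := by
    simpa [sub_add_eq_add_sub] using hP.add_eq hP hP0 hP1 (r - 1) r
  have hP_succ : P (r + 1) = 2 * P r + P (r - 1) := by
    have h := hP.apply_add_two (r - 1)
    rwa [sub_add_cancel, show r - 1 + 2 = r + 1 by ring] at h
  rw [hW.add_eq hP hP0 hP1 m r, hW.add_eq hP hP0 hP1 m (r + r), hW.apply_add_two m,
    hP_double, hP_double_sub_one, hP_succ]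
  simp only [zsmul_eq_mul]
  push_cast
  ring

theorem catalan (hW : IsPellSeq W) (hP : IsPellSeq P) (hP0 : P 0 = 0) (hP1 : P 1 = 1)
    (n r : ℤ) :
    W n ^ 2 - W (n + r) * W (n - r) =
      ((n - r).negOnePow * P r ^ 2 : ℤ) • (W 1 ^ 2 - W 0 * W 2) := by
  have h := hW.catalan_eq_cassini hP hP0 hP1 (n - r) r
  rwa [sub_add_cancel, show n - r + (r + r) = n + r by ring, hW.cassini, smul_smul,
    mul_comm (P r ^ 2)] at h

end CommRing

end IsPellSeq

theorem bi_mul_bi : bi * bi = -1 := by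
  simp [bi, Algebra.TensorProduct.tmul_mul_tmul, Algebra.TensorProduct.one_def,
    ← TensorProduct.neg_tmul]

theorem bj_mul_bj : bj * bj = -1 := by
  simp [bj, Algebra.TensorProduct.tmul_mul_tmul, Algebra.TensorProduct.one_def,
    ← TensorProduct.tmul_neg]

theorem bi_mul_bj : bi * bj = bij := by
  simp [bi, bj, bij, Algebra.TensorProduct.tmul_mul_tmul]

theorem BP_eq_zsmul (P : ℤ → ℤ) (n : ℤ) :
    BP P n = P n • 1 + P (n + 1) • bi + P (n + 2) • bj + P (n + 3) • bij := by
  simp only [BP, Int.cast_smul_eq_zsmul]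

theorem isPellSeq_BP {P : ℤ → ℤ} (hP : IsPellSeq P) : IsPellSeq (BP P) := by
  rw [funext (BP_eq_zsmul P)]
  exact (((hP.zsmul_const 1).add ((hP.comp_add_right 1).zsmul_const bi)).add
    ((hP.comp_add_right 2).zsmul_const bj)).add ((hP.comp_add_right 3).zsmul_const bij)

theorem BP_one_sq_sub_BP_zero_mul_BP_two {P : ℤ → ℤ} (hP : IsPellSeq P) (hP0 : P 0 = 0)
    (hP1 : P 1 = 1) : BP P 1 ^ 2 - BP P 0 * BP P 2 = (12 : ℤ) • (bj + bij) := by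
  have hP2 : P 2 = 2 := by simpa [hP0, hP1] using hP.apply_add_two 0
  have hP3 : P 3 = 5 := by simpa [hP1, hP2] using hP.apply_add_two 1
  have hP4 : P 4 = 12 := by simpa [hP2, hP3] using hP.apply_add_two 2
  have hP5 : P 5 = 29 := by simpa [hP3, hP4] using hP.apply_add_two 3
  simp only [BP_eq_zsmul, zsmul_eq_mul]
  norm_num [hP0, hP1, hP2, hP3, hP4, hP5, ← bi_mul_bj]
  linear_combination (-1 - 6 * bj - bj ^ 2) * bi_mul_bi + (2 + 2 * bi) * bj_mul_bj

theorem bicomplexPell_catalan (P : ℤ → ℤ)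
    (hP : ∀ n : ℤ, P (n + 2) = 2 * P (n + 1) + P n) (hP0 : P 0 = 0) (hP1 : P 1 = 1)
    (n r : ℤ) :
    BP P n ^ 2 - BP P (n + r) * BP P (n - r) =
      (12 * (-1 : ℝ) ^ (n - r) * (P r : ℝ) ^ 2) • (bj + bij) := by
  have hPell : IsPellSeq P := fun n => by rw [hP n, two_nsmul, two_mul]
  rw [(isPellSeq_BP hPell).catalan hPell hP0 hP1,
    BP_one_sq_sub_BP_zero_mul_BP_two hPell hP0 hP1, smul_smul, ← Int.cast_smul_eq_zsmul ℝ]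
  congr 1
  push_cast [Int.cast_negOnePow]
  ring
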